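/- Let f : B → C be a morphism of crossed modules and let L_f be the associated localization functor on XMod (the localization functor whose local objects are exactly the f-local crossed modules). If L_f is a regular-epi localization and for every crossed module T the kernel ker(ℓ^T : T → L_f T) is L_f-acyclic, then L_f is a nullification functor: there exists a crossed module A such that the L_f-local crossed modules are exactly the A-null crossed modules. -/

import Mathlib

set_option linter.unusedVariables false

/-- A crossed module of groups `(M, G, d)` with `G` acting on `M`. -/
structure XMod : Type 1 where
  M : Type
  G : Type
  [grpM : Group M]
  [grpG : Group G]
  act : G →* MulAut M
  d : M →* G
  act_d : ∀ (b : G) (t : M), d (act b t) = b * d t * b⁻¹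
  peiffer : ∀ (t s : M), act (d t) s = t * s * t⁻¹

attribute [instance] XMod.grpM XMod.grpG

/-- A morphism of crossed modules. -/
structure XModHom (N T : XMod) where
  f1 : N.M →* T.M
  f2 : N.G →* T.G
  comm_d : ∀ n, T.d (f1 n) = f2 (N.d n)
  equiv : ∀ (b : N.G) (n : N.M), f1 (N.act b n) = T.act (f2 b) (f1 n)

namespace XModHom

theorem ext {N T : XMod} {f g : XModHom N T} (h1 : f.f1 = g.f1) (h2 : f.f2 = g.f2) :
    f = g := by
  cases f; cases g; cases h1; cases h2; rfl

/-- The identity morphism. -/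
def id (T : XMod) : XModHom T T :=
  ⟨MonoidHom.id _, MonoidHom.id _, fun _ => rfl, fun _ _ => rfl⟩

/-- Composition of morphisms of crossed modules. -/
def comp {A B C : XMod} (g : XModHom B C) (f : XModHom A B) : XModHom A C where
  f1 := g.f1.comp f.f1
  f2 := g.f2.comp f.f2
  comm_d := by intro n; simp [MonoidHom.comp_apply, g.comm_d, f.comm_d]
  equiv := by intro b n; simp [MonoidHom.comp_apply, f.equiv, g.equiv]

/-- The trivial morphism of crossed modules. -/
def triv (A B : XMod) : XModHom A B where
  f1 := 1
  f2 := 1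
  comm_d := by intro n; simp
  equiv := by intro b n; simp

/-- A morphism of crossed modules is an isomorphism if it has a two-sided inverse. -/
def IsIso {A B : XMod} (f : XModHom A B) : Prop :=
  ∃ g : XModHom B A, comp g f = id A ∧ comp f g = id B

/-- Regular epimorphisms of crossed modules are exactly the componentwise
surjective morphisms. -/
def RegEpi {A B : XMod} (f : XModHom A B) : Prop :=
  Function.Surjective f.f1 ∧ Function.Surjective f.f2

/-- `κ` is a kernel of `α` (in the categorical sense). -/
def IsKernelOf {N T Q : XMod} (κ : XModHom N T) (α : XModHom T Q) : Prop :=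
  comp α κ = triv N Q ∧
    ∀ (X : XMod) (u : XModHom X T), comp α u = triv X Q →
      ∃! v : XModHom X N, comp κ v = u

end XModHom

/-- `1 → N → T → Q → 1` is a short exact sequence of crossed modules. -/
def ShortExact {N T Q : XMod} (κ : XModHom N T) (α : XModHom T Q) : Prop :=
  XModHom.IsKernelOf κ α ∧ XModHom.RegEpi α
/-- A localization functor (coaugmented idempotent functor) on `XMod`. -/
structure LocalizationFunctor where
  obj : XMod → XMod
  map : ∀ {A B : XMod}, XModHom A B → XModHom (obj A) (obj B)
  map_id : ∀ A : XMod, map (XModHom.id A) = XModHom.id (obj A)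
  map_comp : ∀ {A B C : XMod} (f : XModHom A B) (g : XModHom B C),
    map (XModHom.comp g f) = XModHom.comp (map g) (map f)
  ell : ∀ A : XMod, XModHom A (obj A)
  natural : ∀ {A B : XMod} (f : XModHom A B),
    XModHom.comp (ell B) f = XModHom.comp (map f) (ell A)
  iso_ell_obj : ∀ A : XMod, XModHom.IsIso (ell (obj A))
  iso_map_ell : ∀ A : XMod, XModHom.IsIso (map (ell A))

namespace LocalizationFunctor

/-- A crossed module is `L`-local if its coaugmentation is an isomorphism. -/
def IsLocal (L : LocalizationFunctor) (X : XMod) : Prop :=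
  XModHom.IsIso (L.ell X)

/-- `L` is a regular-epi localization if every coaugmentation morphism is a
regular epimorphism. -/
def RegEpiLoc (L : LocalizationFunctor) : Prop :=
  ∀ X : XMod, XModHom.RegEpi (L.ell X)

/-- A short exact sequence is `L`-flat if applying `L` yields a short exact sequence. -/
def LFlat (L : LocalizationFunctor) {N T Q : XMod} (κ : XModHom N T) (α : XModHom T Q) : Prop :=
  ShortExact (L.map κ) (L.map α)

end LocalizationFunctor
section Pullback

variable {T Q Q' : XMod} (α : XModHom T Q) (g : XModHom Q' Q)

/-- Level-1 part of the pullback `T ×_Q Q'`, computed componentwise. -/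
def pbM : Subgroup (T.M × Q'.M) where
  carrier := {p | α.f1 p.1 = g.f1 p.2}
  one_mem' := by simp
  mul_mem' := by
    intro a b ha hb
    simp only [Set.mem_setOf_eq, Prod.fst_mul, Prod.snd_mul, map_mul] at *
    rw [ha, hb]
  inv_mem' := by
    intro a ha
    simp only [Set.mem_setOf_eq, Prod.fst_inv, Prod.snd_inv, map_inv] at *
    rw [ha]

/-- Level-2 part of the pullback `T ×_Q Q'`, computed componentwise. -/
def pbG : Subgroup (T.G × Q'.G) where
  carrier := {p | α.f2 p.1 = g.f2 p.2}
  one_mem' := by simp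
  mul_mem' := by
    intro a b ha hb
    simp only [Set.mem_setOf_eq, Prod.fst_mul, Prod.snd_mul, map_mul] at *
    rw [ha, hb]
  inv_mem' := by
    intro a ha
    simp only [Set.mem_setOf_eq, Prod.fst_inv, Prod.snd_inv, map_inv] at *
    rw [ha]

theorem mem_pbM_iff (p : T.M × Q'.M) : p ∈ pbM α g ↔ α.f1 p.1 = g.f1 p.2 := Iff.rfl

theorem mem_pbG_iff (p : T.G × Q'.G) : p ∈ pbG α g ↔ α.f2 p.1 = g.f2 p.2 := Iff.rfl

theorem pb_act_mem {b : T.G × Q'.G} (hb : b ∈ pbG α g) {p : T.M × Q'.M}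
    (hp : p ∈ pbM α g) : (T.act b.1 p.1, Q'.act b.2 p.2) ∈ pbM α g := by
  have hb' : α.f2 b.1 = g.f2 b.2 := hb
  have hp' : α.f1 p.1 = g.f1 p.2 := hp
  show α.f1 (T.act b.1 p.1) = g.f1 (Q'.act b.2 p.2)
  rw [α.equiv, g.equiv, hb', hp']

theorem XMod.act_inv_act (X : XMod) (b : X.G) (t : X.M) :
    X.act b⁻¹ (X.act b t) = t := by
  rw [← MulAut.mul_apply, ← map_mul, inv_mul_cancel, map_one, MulAut.one_apply]

theorem XMod.act_act_inv (X : XMod) (b : X.G) (t : X.M) :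
    X.act b (X.act b⁻¹ t) = t := by
  rw [← MulAut.mul_apply, ← map_mul, mul_inv_cancel, map_one, MulAut.one_apply]

/-- The action of an element of the pullback on the level-1 part, as a group
automorphism. -/
def pbActEquiv (b : ↥(pbG α g)) : ↥(pbM α g) ≃* ↥(pbM α g) where
  toFun p := ⟨(T.act b.1.1 p.1.1, Q'.act b.1.2 p.1.2), pb_act_mem α g b.2 p.2⟩
  invFun p := ⟨(T.act b.1.1⁻¹ p.1.1, Q'.act b.1.2⁻¹ p.1.2),
    pb_act_mem α g ((pbG α g).inv_mem b.2) p.2⟩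
  left_inv p := by
    apply Subtype.ext
    exact Prod.ext (T.act_inv_act _ _) (Q'.act_inv_act _ _)
  right_inv p := by
    apply Subtype.ext
    exact Prod.ext (T.act_act_inv _ _) (Q'.act_act_inv _ _)
  map_mul' p q := by
    apply Subtype.ext
    exact Prod.ext (map_mul _ _ _) (map_mul _ _ _)

/-- The pullback `T ×_Q Q'` of `α : T → Q` along `g : Q' → Q`, computed
componentwise. -/
def pbXMod : XMod where
  M := ↥(pbM α g)
  G := ↥(pbG α g)
  act :=
    { toFun := pbActEquiv α g
      map_one' := by
        apply MulEquiv.ext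
        intro p
        apply Subtype.ext
        apply Prod.ext
        · show T.act (1 : ↥(pbG α g)).1.1 p.1.1 = p.1.1
          simp
        · show Q'.act (1 : ↥(pbG α g)).1.2 p.1.2 = p.1.2
          simp
      map_mul' := by
        intro b c
        apply MulEquiv.ext
        intro p
        apply Subtype.ext
        apply Prod.ext
        · show T.act (b * c).1.1 p.1.1 = T.act b.1.1 (T.act c.1.1 p.1.1)
          simp [map_mul]
        · show Q'.act (b * c).1.2 p.1.2 = Q'.act b.1.2 (Q'.act c.1.2 p.1.2)
          simp [map_mul] }
  d :=
    { toFun := fun p => ⟨(T.d p.1.1, Q'.d p.1.2), by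
        have hp : α.f1 p.1.1 = g.f1 p.1.2 := p.2
        show α.f2 (T.d p.1.1) = g.f2 (Q'.d p.1.2)
        rw [← α.comm_d, ← g.comm_d, hp]⟩
      map_one' := by
        apply Subtype.ext
        apply Prod.ext <;> simp
      map_mul' := by
        intro p q
        apply Subtype.ext
        apply Prod.ext <;> simp }
  act_d := by
    intro b p
    apply Subtype.ext
    apply Prod.ext
    · exact T.act_d _ _
    · exact Q'.act_d _ _
  peiffer := by
    intro p q
    apply Subtype.ext
    apply Prod.ext
    · exact T.peiffer _ _
    · exact Q'.peiffer _ _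

/-- First projection of the pullback. -/
def pbFst : XModHom (pbXMod α g) T where
  f1 := (MonoidHom.fst T.M Q'.M).comp (pbM α g).subtype
  f2 := (MonoidHom.fst T.G Q'.G).comp (pbG α g).subtype
  comm_d := fun _ => rfl
  equiv := fun _ _ => rfl

/-- Second projection of the pullback. -/
def pbSnd : XModHom (pbXMod α g) Q' where
  f1 := (MonoidHom.snd T.M Q'.M).comp (pbM α g).subtype
  f2 := (MonoidHom.snd T.G Q'.G).comp (pbG α g).subtype
  comm_d := fun _ => rfl
  equiv := fun _ _ => rfl

end Pullback
section PullbackMaps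

variable {N T Q Q' : XMod}

/-- The induced morphism from the kernel `N` into the pullback `T ×_Q Q'`. -/
def pbIn (κ : XModHom N T) (α : XModHom T Q) (g : XModHom Q' Q)
    (h : XModHom.comp α κ = XModHom.triv N Q) : XModHom N (pbXMod α g) where
  f1 :=
    { toFun := fun n => ⟨(κ.f1 n, 1), by
        show α.f1 (κ.f1 n) = g.f1 1
        have := congrArg XModHom.f1 h
        have h' : α.f1 (κ.f1 n) = 1 := DFunLike.congr_fun this n
        rw [h', map_one]⟩
      map_one' := by
        apply Subtype.ext
        apply Prod.ext <;> simp <;> first | rfl | exact map_one _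
      map_mul' := by
        intro a b
        apply Subtype.ext
        show (κ.f1 (a * b), (1 : Q'.M)) = (κ.f1 a, (1 : Q'.M)) * (κ.f1 b, (1 : Q'.M))
        simp [Prod.ext_iff, map_mul] }
  f2 :=
    { toFun := fun n => ⟨(κ.f2 n, 1), by
        show α.f2 (κ.f2 n) = g.f2 1
        have := congrArg XModHom.f2 h
        have h' : α.f2 (κ.f2 n) = 1 := DFunLike.congr_fun this n
        rw [h', map_one]⟩
      map_one' := by
        apply Subtype.ext
        apply Prod.ext <;> simp <;> first | rfl | exact map_one _
      map_mul' := by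
        intro a b
        apply Subtype.ext
        show (κ.f2 (a * b), (1 : Q'.G)) = (κ.f2 a, (1 : Q'.G)) * (κ.f2 b, (1 : Q'.G))
        simp [Prod.ext_iff, map_mul] }
  comm_d := by
    intro n
    apply Subtype.ext
    apply Prod.ext
    · exact κ.comm_d n
    · show Q'.d (1 : Q'.M) = 1
      simp
  equiv := by
    intro b n
    apply Subtype.ext
    apply Prod.ext
    · exact κ.equiv b n
    · show (1 : Q'.M) = Q'.act 1 1
      simp

/-- The induced morphism into the pullback `T ×_Q Q'` from an object mapping
trivially to `Q` through the second leg. -/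
def pbInR (α : XModHom T Q) (g : XModHom Q' Q) {X : XMod} (u : XModHom X Q')
    (h : XModHom.comp g u = XModHom.triv X Q) : XModHom X (pbXMod α g) where
  f1 :=
    { toFun := fun n => ⟨(1, u.f1 n), by
        show α.f1 1 = g.f1 (u.f1 n)
        have := congrArg XModHom.f1 h
        have h' : g.f1 (u.f1 n) = 1 := DFunLike.congr_fun this n
        rw [h', map_one]⟩
      map_one' := by
        apply Subtype.ext
        apply Prod.ext <;> simp <;> first | rfl | exact map_one _
      map_mul' := by
        intro a b
        apply Subtype.ext
        show ((1 : T.M), u.f1 (a * b)) = ((1 : T.M), u.f1 a) * ((1 : T.M), u.f1 b)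
        simp [Prod.ext_iff, map_mul] }
  f2 :=
    { toFun := fun n => ⟨(1, u.f2 n), by
        show α.f2 1 = g.f2 (u.f2 n)
        have := congrArg XModHom.f2 h
        have h' : g.f2 (u.f2 n) = 1 := DFunLike.congr_fun this n
        rw [h', map_one]⟩
      map_one' := by
        apply Subtype.ext
        apply Prod.ext <;> simp <;> first | rfl | exact map_one _
      map_mul' := by
        intro a b
        apply Subtype.ext
        show ((1 : T.G), u.f2 (a * b)) = ((1 : T.G), u.f2 a) * ((1 : T.G), u.f2 b)
        simp [Prod.ext_iff, map_mul] }
  comm_d := by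
    intro n
    apply Subtype.ext
    apply Prod.ext
    · show T.d (1 : T.M) = 1
      simp
    · exact u.comm_d n
  equiv := by
    intro b n
    apply Subtype.ext
    apply Prod.ext
    · show (1 : T.M) = T.act 1 1
      simp
    · exact u.equiv b n

/-- The morphism of pullbacks `T ×_Q Q' → E ×_Q Q'` induced by `f : T → E`
with `p ∘ f = α`. -/
def pbMapL {E : XMod} (α : XModHom T Q) (p : XModHom E Q) (g : XModHom Q' Q)
    (f : XModHom T E) (hpf : XModHom.comp p f = α) :
    XModHom (pbXMod α g) (pbXMod p g) where
  f1 :=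
    { toFun := fun w => ⟨(f.f1 w.1.1, w.1.2), by
        show p.f1 (f.f1 w.1.1) = g.f1 w.1.2
        have h' : p.f1 (f.f1 w.1.1) = α.f1 w.1.1 :=
          DFunLike.congr_fun (congrArg XModHom.f1 hpf) w.1.1
        rw [h']
        exact w.2⟩
      map_one' := by
        apply Subtype.ext
        apply Prod.ext <;> simp <;> first | rfl | exact map_one _
      map_mul' := by
        intro a b
        apply Subtype.ext
        apply Prod.ext
        · exact map_mul f.f1 a.1.1 b.1.1
        · rfl }
  f2 :=
    { toFun := fun w => ⟨(f.f2 w.1.1, w.1.2), by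
        show p.f2 (f.f2 w.1.1) = g.f2 w.1.2
        have h' : p.f2 (f.f2 w.1.1) = α.f2 w.1.1 :=
          DFunLike.congr_fun (congrArg XModHom.f2 hpf) w.1.1
        rw [h']
        exact w.2⟩
      map_one' := by
        apply Subtype.ext
        apply Prod.ext <;> simp <;> first | rfl | exact map_one _
      map_mul' := by
        intro a b
        apply Subtype.ext
        apply Prod.ext
        · exact map_mul f.f2 a.1.1 b.1.1
        · rfl }
  comm_d := by
    intro w
    apply Subtype.ext
    apply Prod.ext
    · exact f.comm_d _
    · rfl
  equiv := by
    intro b w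
    apply Subtype.ext
    apply Prod.ext
    · exact f.equiv _ _
    · rfl

end PullbackMaps

/-- A commuting square is a pullback square (categorical definition). -/
def IsPullbackSquare {P X Y Z : XMod} (p1 : XModHom P X) (p2 : XModHom P Y)
    (f : XModHom X Z) (h : XModHom Y Z) : Prop :=
  XModHom.comp f p1 = XModHom.comp h p2 ∧
    ∀ (W : XMod) (u : XModHom W X) (v : XModHom W Y),
      XModHom.comp f u = XModHom.comp h v →
        ∃! w : XModHom W P, XModHom.comp p1 w = u ∧ XModHom.comp p2 w = v

namespace LocalizationFunctor

/-- `L` is admissible for the class of regular epimorphisms: applying `L` to the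
pullback of a regular epimorphism `α : LT → LQ` along the coaugmentation
`ℓ^Q : Q → LQ` yields again a pullback square. -/
def Admissible (L : LocalizationFunctor) : Prop :=
  ∀ (T Q : XMod) (α : XModHom (L.obj T) (L.obj Q)), XModHom.RegEpi α →
    IsPullbackSquare (L.map (pbFst α (L.ell Q))) (L.map (pbSnd α (L.ell Q)))
      (L.map α) (L.map (L.ell Q))

/-- `L` is conditionally flat: the pullback of any `L`-flat short exact sequence
along any morphism is again `L`-flat. -/
def ConditionallyFlat (L : LocalizationFunctor) : Prop :=
  ∀ (N T Q : XMod) (κ : XModHom N T) (α : XModHom T Q) (hse : ShortExact κ α),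
    L.LFlat κ α →
      ∀ (Q' : XMod) (g : XModHom Q' Q),
        L.LFlat (pbIn κ α g hse.1.1) (pbSnd α g)

/-- A short exact sequence `1 → N → T → Q → 1` admits a fiberwise localization:
there is a short exact sequence `1 → LN → E → Q → 1` together with an
`L`-equivalence `T → E` compatible with the coaugmentation of `N`. -/
def AdmitsFiberwise (L : LocalizationFunctor) {N T Q : XMod} (κ : XModHom N T)
    (α : XModHom T Q) : Prop :=
  ∃ (E : XMod) (j : XModHom (L.obj N) E) (p : XModHom E Q) (e : XModHom T E),
    ShortExact j p ∧ XModHom.IsIso (L.map e) ∧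
      XModHom.comp e κ = XModHom.comp j (L.ell N) ∧ XModHom.comp p e = α

end LocalizationFunctor
section Kernel

variable {N T : XMod} (f : XModHom N T)

theorem ker_act_mem {b : N.G} (hb : b ∈ f.f2.ker) {n : N.M} (hn : n ∈ f.f1.ker) :
    N.act b n ∈ f.f1.ker := by
  have hb' : f.f2 b = 1 := hb
  have hn' : f.f1 n = 1 := hn
  show f.f1 (N.act b n) = 1
  rw [f.equiv, hb', hn', map_one]

/-- The automorphism of `ker f.f1` induced by an element of `ker f.f2`. -/
def kerActEquiv (b : ↥f.f2.ker) : ↥f.f1.ker ≃* ↥f.f1.ker where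
  toFun n := ⟨N.act b.1 n.1, ker_act_mem f b.2 n.2⟩
  invFun n := ⟨N.act b.1⁻¹ n.1, ker_act_mem f (f.f2.ker.inv_mem b.2) n.2⟩
  left_inv n := Subtype.ext (N.act_inv_act _ _)
  right_inv n := Subtype.ext (N.act_act_inv _ _)
  map_mul' n m := Subtype.ext (map_mul _ _ _)

/-- The kernel of a morphism of crossed modules, computed componentwise. -/
def kerXMod : XMod where
  M := ↥f.f1.ker
  G := ↥f.f2.ker
  act :=
    { toFun := kerActEquiv f
      map_one' := by
        apply MulEquiv.ext
        intro n
        apply Subtype.ext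
        show N.act (1 : ↥f.f2.ker).1 n.1 = n.1
        simp
      map_mul' := by
        intro b c
        apply MulEquiv.ext
        intro n
        apply Subtype.ext
        show N.act (b * c).1 n.1 = N.act b.1 (N.act c.1 n.1)
        simp [map_mul] }
  d :=
    { toFun := fun n => ⟨N.d n.1, by
        have hn : f.f1 n.1 = 1 := n.2
        show f.f2 (N.d n.1) = 1
        rw [← f.comm_d, hn, map_one]⟩
      map_one' := by
        apply Subtype.ext
        simp
      map_mul' := by
        intro a b
        apply Subtype.ext
        show N.d (a * b).1 = N.d a.1 * N.d b.1
        simp }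
  act_d := by
    intro b n
    apply Subtype.ext
    exact N.act_d _ _
  peiffer := by
    intro n m
    apply Subtype.ext
    exact N.peiffer _ _

/-- The inclusion of the kernel. -/
def kerIncl : XModHom (kerXMod f) N where
  f1 := f.f1.ker.subtype
  f2 := f.f2.ker.subtype
  comm_d := fun _ => rfl
  equiv := fun _ _ => rfl

end Kernel

/-- A crossed module is trivial if both underlying groups are trivial. -/
def XMod.IsTrivial (X : XMod) : Prop :=
  (∀ m : X.M, m = 1) ∧ ∀ b : X.G, b = 1

/-- `X` is `A`-null if the only morphism of crossed modules `A → X` is the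
trivial one. -/
def ANull (A X : XMod) : Prop :=
  ∀ φ : XModHom A X, φ = XModHom.triv A X

/-- `X` is `f`-local if precomposition with `f` is a bijection on morphisms
into `X`. -/
def FLocal {B C : XMod} (f : XModHom B C) (X : XMod) : Prop :=
  Function.Bijective fun φ : XModHom C X => XModHom.comp φ f

/-- The subgroup `[N₂, N₁]` of `N₁` generated by the elements `ᵇt·t⁻¹`. -/
def actCommutator (N : XMod) : Subgroup N.M :=
  Subgroup.closure {x | ∃ (b : N.G) (t : N.M), x = N.act b t * t⁻¹}

section NormalClosure

variable {A W : XMod} (φ : XModHom A W)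

/-- The level-2 part of the normal closure of the image of `φ`:
the normal closure of `φ₂(A₂)` in `W₂`. -/
def ncl2 : Subgroup W.G :=
  Subgroup.normalClosure (Set.range φ.f2)

/-- The level-1 part of the normal closure of the image of `φ`:
the subgroup `φ₁(A₁)^{W₂}·[φ₂(A₂)^{W₂}, W₁]` of `W₁`. -/
def ncl1 : Subgroup W.M :=
  Subgroup.closure
    ({x | ∃ (b : W.G) (m : A.M), x = W.act b (φ.f1 m)} ∪
      {x | ∃ s ∈ ncl2 φ, ∃ w : W.M, x = W.act s w * w⁻¹})

end NormalClosure

/-! The null object is `A = ker ℓ^B × ker ℓ^C`. Both factors are `L`-acyclic, so every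
`L`-local crossed module is `A`-null. Conversely, if `X` is `A`-null then every morphism
`B → X` or `C → X` kills the kernel of the coaugmentation, hence factors uniquely through the
regular epimorphism `ℓ^B` or `ℓ^C`; so `Hom(C, X) → Hom(B, X)` is identified with
precomposition by `L f : L B → L C`, which is an isomorphism because `L B` and `L C` are
`f`-local. -/

namespace XModHom

variable {A B C D X : XMod}

@[simp]
theorem comp_assoc (h : XModHom C D) (g : XModHom B C) (f : XModHom A B) :
    comp (comp h g) f = comp h (comp g f) := rfl

@[simp]
theorem id_comp (f : XModHom A B) : comp (id B) f = f := rfl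

@[simp]
theorem comp_id (f : XModHom A B) : comp f (id A) = f := rfl

@[simp]
theorem triv_comp (f : XModHom A B) : comp (triv B C) f = triv A C := rfl

@[simp]
theorem comp_triv (g : XModHom B C) : comp g (triv A B) = triv A C :=
  ext (MonoidHom.ext fun _ => map_one g.f1) (MonoidHom.ext fun _ => map_one g.f2)

theorem RegEpi.cancel {p : XModHom A B} (hp : p.RegEpi) {φ ψ : XModHom B X}
    (h : comp φ p = comp ψ p) : φ = ψ :=
  ext ((MonoidHom.cancel_right hp.1).1 (congrArg f1 h))
    ((MonoidHom.cancel_right hp.2).1 (congrArg f2 h))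

theorem RegEpi.exists_comp_eq {p : XModHom A B} (hp : p.RegEpi) (u : XModHom A X)
    (hu : comp u (kerIncl p) = triv (kerXMod p) X) : ∃ v : XModHom B X, comp v p = u := by
  let v1 := p.f1.liftOfSurjective hp.1
    ⟨u.f1, fun m hm => DFunLike.congr_fun (congrArg f1 hu) (⟨m, hm⟩ : (kerXMod p).M)⟩
  let v2 := p.f2.liftOfSurjective hp.2
    ⟨u.f2, fun b hb => DFunLike.congr_fun (congrArg f2 hu) (⟨b, hb⟩ : (kerXMod p).G)⟩
  have hv1 : ∀ a, v1 (p.f1 a) = u.f1 a := p.f1.liftOfRightInverse_comp_apply _ _ _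
  have hv2 : ∀ b, v2 (p.f2 b) = u.f2 b := p.f2.liftOfRightInverse_comp_apply _ _ _
  refine ⟨⟨v1, v2, fun s => ?_, fun b s => ?_⟩, ext (MonoidHom.ext hv1) (MonoidHom.ext hv2)⟩
  · obtain ⟨t, rfl⟩ := hp.1 s
    rw [hv1, u.comm_d, p.comm_d, hv2]
  · obtain ⟨t, rfl⟩ := hp.1 s
    obtain ⟨c, rfl⟩ := hp.2 b
    rw [← p.equiv, hv1, hv1, hv2, u.equiv]

theorem RegEpi.bijective_precomp {p : XModHom A B} (hp : p.RegEpi)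
    (hX : ANull (kerXMod p) X) : Function.Bijective fun φ : XModHom B X => comp φ p :=
  ⟨fun _ _ h => hp.cancel h, fun u => hp.exists_comp_eq u (hX _)⟩

theorem IsIso.bijective_precomp {g : XModHom A B} (hg : g.IsIso) :
    Function.Bijective fun φ : XModHom B X => comp φ g := by
  obtain ⟨g', hg'g, hgg'⟩ := hg
  refine Function.bijective_iff_has_inverse.2 ⟨fun ψ => comp ψ g', fun φ => ?_, fun ψ => ?_⟩
  · simp only [comp_assoc, hgg', comp_id]
  · simp only [comp_assoc, hg'g, comp_id]

end XModHom

open XModHom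

theorem XMod.IsTrivial.eq_triv {Y : XMod} (hY : Y.IsTrivial) {X : XMod} (φ : XModHom Y X) :
    φ = triv Y X :=
  ext (MonoidHom.ext fun m => by rw [hY.1 m, map_one]; rfl)
    (MonoidHom.ext fun b => by rw [hY.2 b, map_one]; rfl)

section Product

variable (P Q : XMod)

abbrev prodXMod : XMod where
  M := P.M × Q.M
  G := P.G × Q.G
  act :=
    { toFun := fun b => (P.act b.1).prodCongr (Q.act b.2)
      map_one' := by ext <;> simp [MulEquiv.prodCongr]
      map_mul' := fun b c => by ext <;> simp [MulEquiv.prodCongr] }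
  d := P.d.prodMap Q.d
  act_d b t := Prod.ext (P.act_d _ _) (Q.act_d _ _)
  peiffer t s := Prod.ext (P.peiffer _ _) (Q.peiffer _ _)

def prodInl : XModHom P (prodXMod P Q) where
  f1 := MonoidHom.inl P.M Q.M
  f2 := MonoidHom.inl P.G Q.G
  comm_d n := Prod.ext rfl (map_one Q.d)
  equiv b n := Prod.ext rfl (map_one (Q.act 1)).symm

def prodInr : XModHom Q (prodXMod P Q) where
  f1 := MonoidHom.inr P.M Q.M
  f2 := MonoidHom.inr P.G Q.G
  comm_d n := Prod.ext (map_one P.d) rfl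
  equiv b n := Prod.ext (map_one (P.act 1)).symm rfl

def prodFst : XModHom (prodXMod P Q) P where
  f1 := MonoidHom.fst P.M Q.M
  f2 := MonoidHom.fst P.G Q.G
  comm_d _ := rfl
  equiv _ _ := rfl

def prodSnd : XModHom (prodXMod P Q) Q where
  f1 := MonoidHom.snd P.M Q.M
  f2 := MonoidHom.snd P.G Q.G
  comm_d _ := rfl
  equiv _ _ := rfl

variable {P Q}

theorem prodXMod.hom_eq_triv {X : XMod} (φ : XModHom (prodXMod P Q) X)
    (hl : comp φ (prodInl P Q) = triv P X) (hr : comp φ (prodInr P Q) = triv Q X) :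
    φ = triv (prodXMod P Q) X := by
  refine ext (MonoidHom.ext fun (m : P.M × Q.M) => ?_) (MonoidHom.ext fun (b : P.G × Q.G) => ?_)
  · rw [← Prod.fst_mul_snd m, map_mul]
    exact (congrArg₂ (· * ·) (DFunLike.congr_fun (congrArg f1 hl) m.1)
      (DFunLike.congr_fun (congrArg f1 hr) m.2)).trans (one_mul 1)
  · rw [← Prod.fst_mul_snd b, map_mul]
    exact (congrArg₂ (· * ·) (DFunLike.congr_fun (congrArg f2 hl) b.1)
      (DFunLike.congr_fun (congrArg f2 hr) b.2)).trans (one_mul 1)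

theorem anull_prodXMod_iff {X : XMod} : ANull (prodXMod P Q) X ↔ ANull P X ∧ ANull Q X := by
  refine ⟨fun h => ⟨fun φ => ?_, fun φ => ?_⟩, fun ⟨hP, hQ⟩ φ => ?_⟩
  · calc φ = comp (comp φ (prodFst P Q)) (prodInl P Q) := rfl
      _ = triv P X := by rw [h (comp φ _), triv_comp]
  · calc φ = comp (comp φ (prodSnd P Q)) (prodInr P Q) := rfl
      _ = triv Q X := by rw [h (comp φ _), triv_comp]
  · exact prodXMod.hom_eq_triv φ (hP _) (hQ _)

end Product

namespace LocalizationFunctor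

variable (L : LocalizationFunctor)

theorem exists_comp_ell_eq {T X : XMod} (hX : L.IsLocal X) (u : XModHom T X) :
    ∃ v : XModHom (L.obj T) X, comp v (L.ell T) = u := by
  obtain ⟨g, hg, -⟩ := hX
  exact ⟨comp g (L.map u), by rw [comp_assoc, ← L.natural, ← comp_assoc, hg, id_comp]⟩

theorem anull_of_isLocal {K X : XMod} (hK : (L.obj K).IsTrivial) (hX : L.IsLocal X) :
    ANull K X := by
  intro φ
  obtain ⟨g, hg, -⟩ := hX
  calc φ = comp g (comp (L.ell X) φ) := by rw [← comp_assoc, hg, id_comp]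
    _ = triv K X := by rw [L.natural, hK.eq_triv (L.map φ), triv_comp, comp_triv]

variable {B C : XMod} (f : XModHom B C)

theorem isIso_map (hloc : ∀ X, L.IsLocal X → FLocal f X) (hB : (L.ell B).RegEpi)
    (hC : (L.ell C).RegEpi) : (L.map f).IsIso := by
  obtain ⟨g, hg : comp g f = L.ell B⟩ := (hloc _ (L.iso_ell_obj B)).2 (L.ell B)
  obtain ⟨e, he⟩ := L.exists_comp_ell_eq (L.iso_ell_obj B) g
  have hfg : comp (L.map f) g = L.ell C :=
    (hloc _ (L.iso_ell_obj C)).1 (by simp only [comp_assoc, hg, L.natural])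
  refine ⟨e, hB.cancel ?_, hC.cancel ?_⟩
  · rw [comp_assoc, ← L.natural, ← comp_assoc, he, hg, id_comp]
  · rw [comp_assoc, he, hfg, id_comp]

theorem fLocal_of_anull_ker {X : XMod} (hf : (L.map f).IsIso) (hB : (L.ell B).RegEpi)
    (hC : (L.ell C).RegEpi) (nB : ANull (kerXMod (L.ell B)) X)
    (nC : ANull (kerXMod (L.ell C)) X) : FLocal f X := by
  have square : ((fun φ : XModHom C X => comp φ f) ∘ fun ψ : XModHom (L.obj C) X => comp ψ (L.ell C)) =
      (fun φ : XModHom (L.obj B) X => comp φ (L.ell B)) ∘ fun ψ => comp ψ (L.map f) := by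
    funext ψ
    simp only [Function.comp_apply, comp_assoc, L.natural]
  rw [FLocal, ← Function.Bijective.of_comp_iff _ (hC.bijective_precomp nC), square]
  exact (hB.bijective_precomp nB).comp hf.bijective_precomp

end LocalizationFunctor

/-- Let `f : B → C` be a morphism of crossed modules and
`L_f` the associated localization functor (its local objects are exactly the
`f`-local crossed modules).  If `L_f` is a regular-epi localization and the
kernel of every coaugmentation is `L_f`-acyclic, then `L_f` is a nullification
functor: there is a crossed module `A` whose null objects are exactly the
`L_f`-local crossed modules. -/
theorem acyclic_kernels_nullification {B C : XMod} (f : XModHom B C)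
    (L : LocalizationFunctor)
    (hloc : ∀ X : XMod, L.IsLocal X ↔ FLocal f X)
    (hepi : L.RegEpiLoc)
    (hacy : ∀ T : XMod, (L.obj (kerXMod (L.ell T))).IsTrivial) :
    ∃ A : XMod, ∀ X : XMod, L.IsLocal X ↔ ANull A X := by
  refine ⟨prodXMod (kerXMod (L.ell B)) (kerXMod (L.ell C)), fun X => ?_⟩
  rw [anull_prodXMod_iff]
  refine ⟨fun hX => ⟨L.anull_of_isLocal (hacy B) hX, L.anull_of_isLocal (hacy C) hX⟩,
    fun ⟨nB, nC⟩ => (hloc X).2 ?_⟩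
  have hf : (L.map f).IsIso := L.isIso_map f (fun Y => (hloc Y).1) (hepi B) (hepi C)
  exact L.fLocal_of_anull_ker f hf (hepi B) (hepi C) nB nC
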